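/- For n ≥ 2 and a measurable function k : ℝ → ℝ, the integral J_n = ∫_{[-1,1]^n} Π_{i≠j} exp(−c·k(|t^i − t^j|)) dt^1…dt^n is bounded above by ∫_{[-1,1]} (∫_{[-1,1]} exp(−n c·k(|s−t|)) ds)^{n−1} dt, where c > 0 is a constant. -/

import Mathlib

/-!
Group the factors of the integrand by their first index: it is the product over `i` of
`G i t = ∏_{j ≠ i} exp(-c k |t i - t j|)`, so AM-GM bounds it by `n⁻¹ ∑ i, G i t ^ n`.
Integrating `G i t ^ n` first in the variables `t j` with `j ≠ i` (Fubini) and then in `t i` gives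
the right-hand side, the same for every `i`.
-/

open MeasureTheory ENNReal NNReal Finset

theorem ENNReal.prod_le_inv_card_mul_sum_pow {ι : Type*} [Fintype ι] [Nonempty ι]
    (x : ι → ℝ≥0∞) : ∏ i, x i ≤ (Fintype.card ι : ℝ≥0∞)⁻¹ * ∑ i, x i ^ Fintype.card ι := by
  set N := Fintype.card ι
  have hN : N ≠ 0 := Fintype.card_ne_zero
  by_cases htop : ∃ i, x i = ∞
  · obtain ⟨i, hi⟩ := htop
    have : ∑ j, x j ^ N = ∞ := top_unique <| (pow_eq_top_iff.2 ⟨hi, hN⟩).ge.trans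
      (single_le_sum (f := fun j => x j ^ N) (fun _ _ => zero_le) (mem_univ i))
    simp [this]
  push Not at htop
  lift x to ι → ℝ≥0 using htop
  have amgm := NNReal.geom_mean_le_arith_mean_weighted univ (fun _ => (N : ℝ≥0)⁻¹)
    (fun i => x i ^ N) (by simp [N, hN])
  simp only [NNReal.coe_inv, NNReal.coe_natCast, NNReal.pow_rpow_inv_natCast _ hN,
    ← mul_sum] at amgm
  rw [← ENNReal.coe_natCast, ← ENNReal.coe_inv (by simpa using hN)]
  beta_reduce
  exact_mod_cast amgm

theorem prod_offDiag_le_inv_card_mul_sum_prod_erase_pow {α : Type*} [Fintype α] [DecidableEq α]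
    [Nonempty α] (f : α → α → ℝ≥0∞) :
    ∏ p ∈ univ.offDiag, f p.1 p.2 ≤
      (Fintype.card α : ℝ≥0∞)⁻¹ * ∑ i, ∏ j ∈ univ.erase i, f i j ^ Fintype.card α := by
  rw [prod_finset_product _ univ (fun i => univ.erase i) (by simp [and_comm, eq_comm])]
  simpa only [prod_pow] using ENNReal.prod_le_inv_card_mul_sum_pow _

theorem Fin.prod_erase_eq_prod_succAbove {M : Type*} [CommMonoid M] {m : ℕ} (i : Fin (m + 1))
    (f : Fin (m + 1) → M) : ∏ j ∈ univ.erase i, f j = ∏ l : Fin m, f (i.succAbove l) := by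
  rw [Fin.univ_succAbove _ i, erase_cons, prod_map]
  rfl

variable {α : Type*} [MeasurableSpace α] (μ : Measure α) [SigmaFinite μ]

theorem lintegral_fin_prod_eq_pow {f : α → ℝ≥0∞} (hf : Measurable f) (m : ℕ) :
    ∫⁻ y : Fin m → α, ∏ l, f (y l) ∂Measure.pi (fun _ => μ) = (∫⁻ x, f x ∂μ) ^ m := by
  induction m with
  | zero => simp
  | succ m ih =>
    let e := MeasurableEquiv.piFinSuccAbove (fun _ : Fin (m + 1) => α) 0
    calc ∫⁻ y, ∏ l, f (y l) ∂Measure.pi (fun _ => μ)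
        = ∫⁻ y, (fun z => f z.1 * ∏ l, f (z.2 l)) (e y) ∂Measure.pi (fun _ => μ) := by
          simp [e, Fin.prod_univ_succ, Fin.tail]
      _ = ∫⁻ z, f z.1 * ∏ l, f (z.2 l) ∂μ.prod (Measure.pi fun _ : Fin m => μ) :=
          (measurePreserving_piFinSuccAbove (fun _ => μ) 0).lintegral_comp_emb
            e.measurableEmbedding (fun z => f z.1 * ∏ l, f (z.2 l))
      _ = (∫⁻ x, f x ∂μ) ^ (m + 1) := by
          rw [lintegral_prod_mul (g := fun y : Fin m → α => ∏ l, f (y l)) hf.aemeasurable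
            (by fun_prop : Measurable fun y : Fin m → α => ∏ l, f (y l)).aemeasurable,
            ih, pow_succ']

theorem lintegral_prod_erase_eq_lintegral_pow {n : ℕ} {g : α → α → ℝ≥0∞}
    (hg : Measurable (Function.uncurry g)) (i : Fin n) :
    ∫⁻ t : Fin n → α, ∏ j ∈ univ.erase i, g (t i) (t j) ∂Measure.pi (fun _ => μ) =
      ∫⁻ x, (∫⁻ s, g x s ∂μ) ^ (n - 1) ∂μ := by
  cases n with
  | zero => exact i.elim0
  | succ m =>
    let e := MeasurableEquiv.piFinSuccAbove (fun _ : Fin (m + 1) => α) i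
    calc ∫⁻ t, ∏ j ∈ univ.erase i, g (t i) (t j) ∂Measure.pi (fun _ => μ)
        = ∫⁻ t, (fun z => ∏ l, g z.1 (z.2 l)) (e t) ∂Measure.pi (fun _ => μ) := by
          simp [e, Fin.prod_erase_eq_prod_succAbove, Fin.removeNth]
      _ = ∫⁻ z, ∏ l, g z.1 (z.2 l) ∂μ.prod (Measure.pi fun _ : Fin m => μ) :=
          (measurePreserving_piFinSuccAbove (fun _ => μ) i).lintegral_comp_emb
            e.measurableEmbedding (fun z => ∏ l, g z.1 (z.2 l))
      _ = ∫⁻ x, (∫⁻ s, g x s ∂μ) ^ m ∂μ := by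
          rw [lintegral_prod _ (by fun_prop)]
          exact lintegral_congr fun x => lintegral_fin_prod_eq_pow μ hg.of_uncurry_left m

theorem lintegral_prod_offDiag_le {n : ℕ} (hn : n ≠ 0) {f : α → α → ℝ≥0∞}
    (hf : Measurable (Function.uncurry f)) :
    ∫⁻ t : Fin n → α, ∏ p ∈ univ.offDiag, f (t p.1) (t p.2) ∂Measure.pi (fun _ => μ) ≤
      ∫⁻ x, (∫⁻ s, f x s ^ n ∂μ) ^ (n - 1) ∂μ := by
  have : NeZero n := ⟨hn⟩
  have hfn : Measurable (Function.uncurry fun x s => f x s ^ n) := hf.pow_const n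
  calc ∫⁻ t, ∏ p ∈ univ.offDiag, f (t p.1) (t p.2) ∂Measure.pi (fun _ => μ)
      ≤ ∫⁻ t, (n : ℝ≥0∞)⁻¹ * ∑ i, ∏ j ∈ univ.erase i, f (t i) (t j) ^ n
          ∂Measure.pi (fun _ => μ) :=
        lintegral_mono fun t => by
          simpa using prod_offDiag_le_inv_card_mul_sum_prod_erase_pow fun i j => f (t i) (t j)
    _ = (n : ℝ≥0∞)⁻¹ * ∑ _i : Fin n, ∫⁻ x, (∫⁻ s, f x s ^ n ∂μ) ^ (n - 1) ∂μ := by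
        rw [lintegral_const_mul' _ _ (by simp [hn]), lintegral_finsetSum _ fun i _ => by fun_prop]
        simp_rw [lintegral_prod_erase_eq_lintegral_pow μ hfn]
    _ = ∫⁻ x, (∫⁻ s, f x s ^ n ∂μ) ^ (n - 1) ∂μ := by
        rw [sum_const, card_univ, Fintype.card_fin, nsmul_eq_mul,
          ENNReal.inv_mul_cancel_left (by simpa) (by simp)]

theorem ENNReal.ofReal_exp_pow (x : ℝ) (n : ℕ) :
    ENNReal.ofReal (Real.exp x) ^ n = ENNReal.ofReal (Real.exp (n * x)) := by
  rw [← ENNReal.ofReal_pow (Real.exp_pos x).le, Real.exp_nat_mul]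

theorem stmt1_general (n : ℕ) (hn : 2 ≤ n) (c : ℝ) (k : ℝ → ℝ) (hk : Measurable k) :
    ∫⁻ t : Fin n → ℝ in Set.univ.pi (fun _ => Set.Icc (-1 : ℝ) 1),
        ∏ p ∈ Finset.univ.offDiag,
          ENNReal.ofReal (Real.exp (-c * k |t p.1 - t p.2|)) ≤
      ∫⁻ t in Set.Icc (-1 : ℝ) 1,
        (∫⁻ s in Set.Icc (-1 : ℝ) 1,
            ENNReal.ofReal (Real.exp (-((n : ℝ) * c) * k |s - t|))) ^ (n - 1) := by
  have hf : Measurable (Function.uncurry fun x y : ℝ =>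
      ENNReal.ofReal (Real.exp (-c * k |x - y|))) := by fun_prop
  rw [volume_pi, Measure.restrict_pi_pi]
  refine (lintegral_prod_offDiag_le _ (by omega) hf).trans_eq (lintegral_congr fun t => ?_)
  simp_rw [ofReal_exp_pow, abs_sub_comm t, neg_mul, mul_neg, mul_assoc]

/-- the AM–GM bound
`J_n ≤ ∫_{[-1,1]} (∫_{[-1,1]} exp(-n c k(|s-t|)) ds)^{n-1} dt`. -/
theorem stmt1 (n : ℕ) (hn : 2 ≤ n) (c : ℝ) (hc : 0 < c) (k : ℝ → ℝ) (hk : Measurable k) :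
    ∫⁻ t : Fin n → ℝ in Set.univ.pi (fun _ => Set.Icc (-1 : ℝ) 1),
        ∏ p ∈ Finset.univ.offDiag,
          ENNReal.ofReal (Real.exp (-c * k |t p.1 - t p.2|)) ≤
      ∫⁻ t in Set.Icc (-1 : ℝ) 1,
        (∫⁻ s in Set.Icc (-1 : ℝ) 1,
            ENNReal.ofReal (Real.exp (-((n : ℝ) * c) * k |s - t|))) ^ (n - 1) :=
  stmt1_general n hn c k hk
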